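/- Under the setup of a Hamiltonian flow (Q(t,q,p), P(t,q,p)) with action S(t,q,p) = ∫₀ᵗ (P·∂_τ Q − H(Q,P)) dτ (flow C¹ in (q,p), staying in |P| > 0 on [0,T]), define the phase Φ(t,x,y,q,p) = S(t,q,p) + (i/2)|x − Q(t,q,p)|² + P(t,q,p)·(x − Q(t,q,p)) + (i/2)|y − q|² − p·(y − q), and set ∂_z = ∂_q − i∂_p and Z(t,q,p) = ∂_z(Q + iP)(t,q,p) (the d × d matrix with entries Z_{jk} = ∂_{z_j}(Q_k + iP_k)). Then for every t ∈ [0,T], x, y ∈ ℝ^d and j = 1,…,d: i ∂_{z_j} Φ(t,x,y,q,p) = Σ_k Z_{jk}(t,q,p) (x − Q(t,q,p))_k. -/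

import Mathlib

/-!
Split `Φ` into its real part `S + P·(x − Q) − p·(y − q)` and imaginary part
`(|x − Q|² + |y − q|²)/2`. By the action identity `dS = P·dQ − p·dq` the terms `P·dQ` and
`p·dq` cancel, so `dΦ = (x − Q)·dP − (y − q)·dp − i((x − Q)·dQ + (y − q)·dq)`; in the
combination `i(∂_q − i∂_p)` the `y − q` terms cancel as well, leaving `(x − Q)·∂_z(Q + iP)`.

The action identity comes from differentiating `S = ∫₀ᵗ (p·∂_pH − H)(Q, P) dτ` under the
integral sign. The flow is only `C¹`, so the variational equation `Ṁ = DX_H(Q, P) M` for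
`M = ∂_{(q,p)}(Q, P)` is obtained by differentiating the integral form of the flow in `(q, p)`.
Along it, the derivative of the integrand in direction `η` is `d/dτ (P·(Mη)_Q)`, so the
integral telescopes to `P·∂Q − p·∂q`.
-/

open MeasureTheory

variable (d : ℕ)

/-- The FGA phase
`Φ = S + (i/2)|x − Q|² + P·(x − Q) + (i/2)|y − q|² − p·(y − q)`. -/
noncomputable def fgaPhase
    (Q P : ℝ → EuclideanSpace ℝ (Fin d) → EuclideanSpace ℝ (Fin d) → EuclideanSpace ℝ (Fin d))
    (S : ℝ → EuclideanSpace ℝ (Fin d) → EuclideanSpace ℝ (Fin d) → ℝ)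
    (t : ℝ) (x y q p : EuclideanSpace ℝ (Fin d)) : ℂ :=
  ((S t q p : ℝ) : ℂ) + Complex.I/2 * (‖x - Q t q p‖ : ℂ)^2
    + ((inner ℝ (P t q p) (x - Q t q p) : ℝ) : ℂ)
    + Complex.I/2 * (‖y - q‖ : ℂ)^2 - ((inner ℝ p (y - q) : ℝ) : ℂ)

open Set Function ContinuousLinearMap
open scoped Interval

theorem hasFDerivAt_intervalIntegral_of_continuousOn
    {F V : Type*} [NormedAddCommGroup F] [NormedSpace ℝ F] [ProperSpace F]
    [NormedAddCommGroup V] [NormedSpace ℝ V] [CompleteSpace V]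
    {Ω : Set F} (hΩ : IsOpen Ω) {u₀ : F} (hu₀ : u₀ ∈ Ω) {a b : ℝ}
    {f : ℝ → F → V} {f' : ℝ → F → F →L[ℝ] V}
    (hf : ContinuousOn (uncurry f) ([[a, b]] ×ˢ Ω))
    (hf' : ContinuousOn (uncurry f') ([[a, b]] ×ˢ Ω))
    (hderiv : ∀ τ ∈ [[a, b]], ∀ u ∈ Ω, HasFDerivAt (f τ) (f' τ u) u) :
    HasFDerivAt (fun u => ∫ τ in a..b, f τ u) (∫ τ in a..b, f' τ u₀) u₀ := by
  obtain ⟨r, hr, hball⟩ := Metric.isOpen_iff.1 hΩ u₀ hu₀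
  have hclosedBall : Metric.closedBall u₀ (r / 2) ⊆ Ω :=
    (Metric.closedBall_subset_ball (half_lt_self hr)).trans hball
  obtain ⟨C, hC⟩ := (isCompact_uIcc.prod (isCompact_closedBall u₀ (r / 2)))
    |>.exists_bound_of_continuousOn (hf'.mono (prod_mono_right hclosedBall))
  refine intervalIntegral.hasFDerivAt_integral_of_dominated_of_fderiv_le
    (F := fun u τ => f τ u) (bound := fun _ => C) (Metric.ball_mem_nhds u₀ (half_pos hr))
    ?_ ((hf.uncurry_right u₀ hu₀).intervalIntegrable)
    (((hf'.uncurry_right u₀ hu₀).mono uIoc_subset_uIcc).aestronglyMeasurable measurableSet_uIoc)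
    (.of_forall fun τ hτ u hu =>
      hC (τ, u) ⟨uIoc_subset_uIcc hτ, Metric.ball_subset_closedBall hu⟩)
    intervalIntegrable_const
    (.of_forall fun τ hτ u hu =>
      hderiv τ (uIoc_subset_uIcc hτ) u (hclosedBall (Metric.ball_subset_closedBall hu)))
  filter_upwards [hΩ.mem_nhds hu₀] with u hu
  exact ((hf.uncurry_right u hu).mono uIoc_subset_uIcc).aestronglyMeasurable measurableSet_uIoc

theorem uIcc_zero_subset_Icc {t T : ℝ} (ht : t ∈ Icc 0 T) : [[0, t]] ⊆ Icc 0 T :=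
  uIcc_subset_Icc (left_mem_Icc.2 (ht.1.trans ht.2)) ht

theorem EuclideanSpace.ofReal_inner_eq_sum {ι : Type*} [Fintype ι] (a b : EuclideanSpace ℝ ι) :
    ((inner ℝ a b : ℝ) : ℂ) = ∑ k, (a k : ℂ) * (b k : ℂ) := by
  simp [PiLp.inner_apply, mul_comm]

section Slices

variable {𝕜 E₁ E₂ V : Type*} [NontriviallyNormedField 𝕜] [NormedAddCommGroup E₁]
  [NormedSpace 𝕜 E₁] [NormedAddCommGroup E₂] [NormedSpace 𝕜 E₂] [NormedAddCommGroup V]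
  [NormedSpace 𝕜 V] {f : E₁ × E₂ → V} {L : E₁ × E₂ →L[𝕜] V} {a : E₁} {b : E₂}

theorem HasFDerivAt.fderiv_comp_prodMk_left_apply (hf : HasFDerivAt f L (a, b)) (v : E₁) :
    fderiv 𝕜 (fun a' => f (a', b)) a v = L (v, 0) :=
  congrArg (· v) (hf.comp a (hasFDerivAt_prodMk_left (𝕜 := 𝕜) a b)).fderiv

theorem HasFDerivAt.fderiv_comp_prodMk_right_apply (hf : HasFDerivAt f L (a, b)) (v : E₂) :
    fderiv 𝕜 (fun b' => f (a, b')) b v = L (0, v) :=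
  congrArg (· v) (hf.comp b (hasFDerivAt_prodMk_right (𝕜 := 𝕜) a b)).fderiv

end Slices

section Flow

variable {E : Type*} [NormedAddCommGroup E] [NormedSpace ℝ E]

structure IsFlowOn (F : E → E) (φ : ℝ → E → E) (T : ℝ) (U : Set E) : Prop where
  contDiffOn : ContDiffOn ℝ 1 (uncurry φ) (Icc 0 T ×ˢ U)
  hasDerivAt : ∀ s ∈ Icc 0 T, ∀ u ∈ U, HasDerivAt (φ · u) (F (φ s u)) s
  mapsTo : MapsTo (uncurry φ) (Icc 0 T ×ˢ U) U
  initial : ∀ u ∈ U, φ 0 u = u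

namespace IsFlowOn

variable {F : E → E} {φ : ℝ → E → E} {T s t : ℝ} {U : Set E} {u : E}
  (hφ : IsFlowOn F φ T U)
include hφ

theorem mem (hs : s ∈ Icc 0 T) (hu : u ∈ U) : φ s u ∈ U :=
  hφ.mapsTo (mk_mem_prod hs hu)

theorem hasFDerivAt_fderivWithin (hU : IsOpen U) (hs : s ∈ Icc 0 T) (hu : u ∈ U) :
    HasFDerivAt (φ s)
      ((fderivWithin ℝ (uncurry φ) (Icc 0 T ×ˢ U) (s, u)).comp (inr ℝ ℝ E)) u :=
  ((hφ.contDiffOn.differentiableOn one_ne_zero (s, u) ⟨hs, hu⟩).hasFDerivWithinAt.comp u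
    (hasFDerivAt_prodMk_right s u).hasFDerivWithinAt fun _ hv => ⟨hs, hv⟩).hasFDerivAt
    (hU.mem_nhds hu)

theorem hasFDerivAt (hU : IsOpen U) (hs : s ∈ Icc 0 T) (hu : u ∈ U) :
    HasFDerivAt (φ s) (fderiv ℝ (φ s) u) u :=
  (hφ.hasFDerivAt_fderivWithin hU hs hu).differentiableAt.hasFDerivAt

theorem continuousOn_fderiv (hU : IsOpen U) (hT : 0 < T) :
    ContinuousOn (uncurry fun s => fderiv ℝ (φ s)) (Icc 0 T ×ˢ U) :=
  ((hφ.contDiffOn.continuousOn_fderivWithin ((uniqueDiffOn_Icc hT).prod hU.uniqueDiffOn)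
    le_rfl).clm_comp continuousOn_const).congr fun _ hz =>
      (hφ.hasFDerivAt_fderivWithin hU hz.1 hz.2).fderiv

theorem continuousOn_fderiv_comp {V : Type*} [NormedAddCommGroup V] [NormedSpace ℝ V]
    (hU : IsOpen U) (hT : 0 < T) {f : E → V} (hf : ContDiffOn ℝ 1 f U) :
    ContinuousOn (uncurry fun τ v => (fderiv ℝ f (φ τ v)).comp (fderiv ℝ (φ τ) v))
      (Icc 0 T ×ˢ U) :=
  ((hf.continuousOn_fderiv_of_isOpen hU le_rfl).comp hφ.contDiffOn.continuousOn
    hφ.mapsTo).clm_comp (hφ.continuousOn_fderiv hU hT)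

variable [ProperSpace E]

theorem integral_comp_eq_sub (hF : ContinuousOn F U) (ht : t ∈ Icc 0 T) (hu : u ∈ U) :
    ∫ τ in 0..t, F (φ τ u) = φ t u - u := by
  have horbit : ContinuousOn (F <| φ · u) (Icc 0 T) :=
    hF.comp (hφ.contDiffOn.continuousOn.uncurry_right u hu) fun _ hτ => hφ.mem hτ hu
  rw [intervalIntegral.integral_eq_sub_of_hasDerivAt
    (fun τ hτ => hφ.hasDerivAt τ (uIcc_zero_subset_Icc ht hτ) u hu)
    (horbit.mono (uIcc_zero_subset_Icc ht)).intervalIntegrable, hφ.initial u hu]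

theorem hasFDerivAt_integral_comp {V : Type*} [NormedAddCommGroup V] [NormedSpace ℝ V]
    [CompleteSpace V] (hU : IsOpen U) (hT : 0 < T) {f : E → V} (hf : ContDiffOn ℝ 1 f U)
    (ht : t ∈ Icc 0 T) (hu : u ∈ U) :
    HasFDerivAt (fun u => ∫ τ in 0..t, f (φ τ u))
      (∫ τ in 0..t, (fderiv ℝ f (φ τ u)).comp (fderiv ℝ (φ τ) u)) u := by
  have hsub : [[0, t]] ×ˢ U ⊆ Icc 0 T ×ˢ U := prod_mono_left (uIcc_zero_subset_Icc ht)
  refine hasFDerivAt_intervalIntegral_of_continuousOn (f := fun τ u => f (φ τ u))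
    (f' := fun τ u => (fderiv ℝ f (φ τ u)).comp (fderiv ℝ (φ τ) u)) hU hu
    ((hf.continuousOn.comp hφ.contDiffOn.continuousOn hφ.mapsTo).mono hsub)
    ((hφ.continuousOn_fderiv_comp hU hT hf).mono hsub) fun τ hτ v hv => ?_
  have hτ : τ ∈ Icc 0 T := (hsub (mk_mem_prod hτ hv)).1
  exact ((hf.differentiableOn one_ne_zero).differentiableAt
    (hU.mem_nhds (hφ.mem hτ hv))).hasFDerivAt.comp v (hφ.hasFDerivAt hU hτ hv)

theorem fderiv_eq_id_add_integral (hU : IsOpen U) (hT : 0 < T) (hF : ContDiffOn ℝ 1 F U)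
    (hs : s ∈ Icc 0 T) (hu : u ∈ U) :
    fderiv ℝ (φ s) u
      = .id ℝ E + ∫ τ in 0..s, (fderiv ℝ F (φ τ u)).comp (fderiv ℝ (φ τ) u) := by
  have hintegral : (fun v => ∫ τ in 0..s, F (φ τ v)) =ᶠ[nhds u] fun v => φ s v - v := by
    filter_upwards [hU.mem_nhds hu] with v hv
    exact hφ.integral_comp_eq_sub hF.continuousOn hs hv
  rw [((hφ.hasFDerivAt_integral_comp hU hT hF hs hu).congr_of_eventuallyEq hintegral.symm).unique
    ((hφ.hasFDerivAt hU hs hu).sub (hasFDerivAt_id u))]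
  abel

theorem fderiv_zero (hU : IsOpen U) (hT : 0 < T) (hF : ContDiffOn ℝ 1 F U) (hu : u ∈ U) :
    fderiv ℝ (φ 0) u = .id ℝ E := by
  simpa using hφ.fderiv_eq_id_add_integral hU hT hF (left_mem_Icc.2 hT.le) hu

theorem hasDerivAt_fderiv (hU : IsOpen U) (hT : 0 < T) (hF : ContDiffOn ℝ 1 F U)
    (hs : s ∈ Ioo 0 T) (hu : u ∈ U) :
    HasDerivAt (fun τ => fderiv ℝ (φ τ) u)
      ((fderiv ℝ F (φ s u)).comp (fderiv ℝ (φ s) u)) s := by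
  have hcont := (hφ.continuousOn_fderiv_comp hU hT hF).uncurry_right u hu
  have hnhds : Icc 0 T ∈ nhds s := Icc_mem_nhds hs.1 hs.2
  refine ((intervalIntegral.integral_hasDerivAt_right
    (hcont.mono (uIcc_zero_subset_Icc (Ioo_subset_Icc_self hs))).intervalIntegrable
    ⟨_, hnhds, hcont.aestronglyMeasurable measurableSet_Icc⟩
    (hcont.continuousAt hnhds)).const_add (.id ℝ E)).congr_of_eventuallyEq ?_
  filter_upwards [hnhds] with τ hτ
  exact hφ.fderiv_eq_id_add_integral hU hT hF hτ hu

end IsFlowOn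

end Flow

section Hamiltonian

open InnerProductSpace

variable {E : Type*} [NormedAddCommGroup E] [InnerProductSpace ℝ E] [CompleteSpace E]

noncomputable def hamiltonianField (H : E → E → ℝ) (u : E × E) : E × E :=
  (gradient (H u.1) u.2, -gradient (fun q => H q u.2) u.1)

noncomputable def actionDensity (H : E → E → ℝ) (u : E × E) : ℝ :=
  inner ℝ u.2 (gradient (H u.1) u.2) - H u.1 u.2

variable {H : E → E → ℝ} {U : Set (E × E)} {u : E × E}

theorem gradient_right_eq_toDual_symm (hH : DifferentiableAt ℝ (uncurry H) u) :
    gradient (H u.1) u.2 = (toDual ℝ E).symm ((fderiv ℝ (uncurry H) u).comp (inr ℝ E E)) := by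
  have := hH.hasFDerivAt.comp u.2 (hasFDerivAt_prodMk_right (𝕜 := ℝ) u.1 u.2)
  exact this.hasGradientAt.gradient

theorem gradient_left_eq_toDual_symm (hH : DifferentiableAt ℝ (uncurry H) u) :
    gradient (fun q => H q u.2) u.1
      = (toDual ℝ E).symm ((fderiv ℝ (uncurry H) u).comp (inl ℝ E E)) := by
  have := hH.hasFDerivAt.comp u.1 (hasFDerivAt_prodMk_left (𝕜 := ℝ) u.1 u.2)
  exact this.hasGradientAt.gradient

theorem fderiv_uncurry_apply_eq_inner_hamiltonianField
    (hH : DifferentiableAt ℝ (uncurry H) u) (η : E × E) :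
    fderiv ℝ (uncurry H) u η
      = inner ℝ (hamiltonianField H u).1 η.2 - inner ℝ (hamiltonianField H u).2 η.1 := by
  simp only [hamiltonianField, gradient_right_eq_toDual_symm hH, gradient_left_eq_toDual_symm hH,
    inner_neg_left, sub_neg_eq_add, toDual_symm_apply, coe_comp, Function.comp_apply, inl_apply,
    inr_apply, ← map_add]
  congr 1
  simp

variable (hU : IsOpen U) (hH : ContDiffOn ℝ 2 (uncurry H) U)
include hU hH

theorem contDiffOn_hamiltonianField : ContDiffOn ℝ 1 (hamiltonianField H) U := by
  have hdual (L : E →L[ℝ] E × E) :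
      ContDiffOn ℝ 1 (fun v => (toDual ℝ E).symm ((fderiv ℝ (uncurry H) v).comp L)) U :=
    (toDual ℝ E).symm.contDiff.comp_contDiffOn
      ((hH.fderiv_of_isOpen hU (by norm_num)).clm_comp contDiffOn_const)
  refine ((hdual (inr ℝ E E)).prodMk (hdual (inl ℝ E E)).neg).congr fun v hv => ?_
  have hdiff := (hH.differentiableOn two_ne_zero).differentiableAt (hU.mem_nhds hv)
  simp only [hamiltonianField, gradient_right_eq_toDual_symm hdiff,
    gradient_left_eq_toDual_symm hdiff]

theorem contDiffOn_actionDensity : ContDiffOn ℝ 1 (actionDensity H) U :=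
  (contDiffOn_snd.inner ℝ (contDiffOn_hamiltonianField hU hH).fst).sub (hH.of_le one_le_two)

theorem fderiv_actionDensity_apply (hu : u ∈ U) (η : E × E) :
    fderiv ℝ (actionDensity H) u η
      = inner ℝ u.2 (fderiv ℝ (hamiltonianField H) u η).1
        + inner ℝ (hamiltonianField H u).2 η.1 := by
  have hX := ((contDiffOn_hamiltonianField hU hH).differentiableOn one_ne_zero).differentiableAt
    (hU.mem_nhds hu)
  have hHu := (hH.differentiableOn two_ne_zero).differentiableAt (hU.mem_nhds hu)
  have hinner := hasFDerivAt_snd.inner ℝ hX.hasFDerivAt.fst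
  have hderiv : HasFDerivAt (actionDensity H) _ u := hinner.sub hHu.hasFDerivAt
  rw [hderiv.fderiv]
  simp only [sub_apply, ContinuousLinearMap.comp_apply, ContinuousLinearMap.prod_apply,
    fderivInnerCLM_apply, coe_snd', coe_fst', fderiv_uncurry_apply_eq_inner_hamiltonianField hHu]
  simp only [hamiltonianField, real_inner_comm η.2]
  ring

variable [FiniteDimensional ℝ E] {φ : ℝ → E × E → E × E} {T t s : ℝ} (hT : 0 < T)
  (hφ : IsFlowOn (hamiltonianField H) φ T U)
include hT hφ

theorem hasDerivAt_inner_snd_fderiv_fst (hs : s ∈ Ioo 0 T) (hu : u ∈ U) (η : E × E) :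
    HasDerivAt (fun τ => inner ℝ (φ τ u).2 (fderiv ℝ (φ τ) u η).1)
      (fderiv ℝ (actionDensity H) (φ s u) (fderiv ℝ (φ s) u η)) s := by
  have hsT := Ioo_subset_Icc_self hs
  have hP := hasFDerivAt_snd.comp_hasDerivAt s (hφ.hasDerivAt s hsT u hu)
  have hM := hasFDerivAt_fst.comp_hasDerivAt s
    ((apply ℝ (E × E) η).hasFDerivAt.comp_hasDerivAt s
      (hφ.hasDerivAt_fderiv hU hT (contDiffOn_hamiltonianField hU hH) hs hu))
  rw [fderiv_actionDensity_apply hU hH (hφ.mem hsT hu)]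
  exact hP.inner ℝ hM

theorem hasFDerivAt_integral_actionDensity (ht : t ∈ Icc 0 T) (hu : u ∈ U) :
    HasFDerivAt (fun v => ∫ τ in 0..t, actionDensity H (φ τ v))
      ((innerSL ℝ (φ t u).2).comp ((fst ℝ E E).comp (fderiv ℝ (φ t) u))
        - (innerSL ℝ u.2).comp (fst ℝ E E)) u := by
  have hG := contDiffOn_actionDensity hU hH
  refine (hφ.hasFDerivAt_integral_comp hU hT hG ht hu).congr_fderiv
    (ContinuousLinearMap.ext fun η => ?_)
  have hcont := (hφ.continuousOn_fderiv_comp hU hT hG).uncurry_right u hu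
  have hsub := uIcc_zero_subset_Icc ht
  have hpairing :
      ContinuousOn (fun τ => inner ℝ (φ τ u).2 (fderiv ℝ (φ τ) u η).1) (Icc 0 T) :=
    (continuous_snd.comp_continuousOn (hφ.contDiffOn.continuousOn.uncurry_right u hu)).inner
      (continuous_fst.comp_continuousOn
        (((hφ.continuousOn_fderiv hU hT).uncurry_right u hu).clm_apply continuousOn_const))
  rw [ContinuousLinearMap.intervalIntegral_apply (hcont.mono hsub).intervalIntegrable]
  simp only [ContinuousLinearMap.comp_apply]
  rw [intervalIntegral.integral_eq_sub_of_hasDeriv_right_of_le ht.1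
      (hpairing.mono (Icc_subset_Icc le_rfl ht.2))
      (fun τ hτ => (hasDerivAt_inner_snd_fderiv_fst hU hH hT hφ
        (Ioo_subset_Ioo_right ht.2 hτ) hu η).hasDerivWithinAt)
      ((hcont.clm_apply continuousOn_const).mono hsub).intervalIntegrable]
  simp [hφ.initial u hu, hφ.fderiv_zero hU hT (contDiffOn_hamiltonianField hU hH) hu]

theorem hasFDerivAt_action (ht : t ∈ Icc 0 T) (hu : u ∈ U) :
    HasFDerivAt
      (fun v => ∫ τ in 0..t,
        inner ℝ (φ τ v).2 (deriv (fun s => (φ s v).1) τ) - H (φ τ v).1 (φ τ v).2)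
      ((innerSL ℝ (φ t u).2).comp ((fst ℝ E E).comp (fderiv ℝ (φ t) u))
        - (innerSL ℝ u.2).comp (fst ℝ E E)) u := by
  refine (hasFDerivAt_integral_actionDensity hU hH hT hφ ht hu).congr_of_eventuallyEq ?_
  filter_upwards [hU.mem_nhds hu] with v hv
  refine intervalIntegral.integral_congr fun τ hτ => ?_
  have hQ := hasFDerivAt_fst.comp_hasDerivAt τ
    (hφ.hasDerivAt τ (uIcc_zero_subset_Icc ht hτ) v hv)
  rw [show deriv (fun s => (φ s v).1) τ = (hamiltonianField H (φ τ v)).1 from hQ.deriv]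
  rfl

end Hamiltonian

section Phase

open Complex

variable {d}
  {Q P : ℝ → EuclideanSpace ℝ (Fin d) → EuclideanSpace ℝ (Fin d) → EuclideanSpace ℝ (Fin d)}
  {S : ℝ → EuclideanSpace ℝ (Fin d) → EuclideanSpace ℝ (Fin d) → ℝ} {t : ℝ}
  {x y q p : EuclideanSpace ℝ (Fin d)}
  {M : EuclideanSpace ℝ (Fin d) × EuclideanSpace ℝ (Fin d) →L[ℝ]
    EuclideanSpace ℝ (Fin d) × EuclideanSpace ℝ (Fin d)}
  (hQP : HasFDerivAt (fun u : _ × _ => (Q t u.1 u.2, P t u.1 u.2)) M (q, p))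
  (hS : HasFDerivAt (fun u : _ × _ => S t u.1 u.2)
    ((innerSL ℝ (P t q p)).comp ((fst ℝ _ _).comp M) - (innerSL ℝ p).comp (fst ℝ _ _)) (q, p))
include hQP hS

theorem hasFDerivAt_fgaPhase :
    HasFDerivAt (fun u : _ × _ => fgaPhase d Q P S t x y u.1 u.2)
      (ofRealCLM.comp ((innerSL ℝ (x - Q t q p)).comp ((snd ℝ _ _).comp M)
          - (innerSL ℝ (y - q)).comp (snd ℝ _ _))
        - I • ofRealCLM.comp ((innerSL ℝ (x - Q t q p)).comp ((fst ℝ _ _).comp M)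
          + (innerSL ℝ (y - q)).comp (fst ℝ _ _))) (q, p) := by
  have hxQ := (hasFDerivAt_const x (q, p)).sub hQP.fst
  have hyq := (hasFDerivAt_const y (q, p)).sub (hasFDerivAt_fst (𝕜 := ℝ))
  have hRe := (hS.add (hQP.snd.inner ℝ hxQ)).sub ((hasFDerivAt_snd (𝕜 := ℝ)).inner ℝ hyq)
  have hIm := hxQ.norm_sq.add hyq.norm_sq
  have hΦ := (ofRealCLM.hasFDerivAt.comp (q, p) hRe).add
    ((ofRealCLM.hasFDerivAt.comp (q, p) hIm).const_mul (I / 2))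
  refine (hΦ.congr_of_eventuallyEq (.of_forall fun u => ?_)).congr_fderiv
    (ContinuousLinearMap.ext fun η => ?_)
  · simp only [fgaPhase, Function.comp_apply, Pi.add_apply, Pi.sub_apply, ofRealCLM_apply]
    push_cast
    ring
  · simp only [add_apply, sub_apply, smul_apply, ContinuousLinearMap.comp_apply,
      ContinuousLinearMap.prod_apply, fderivInnerCLM_apply, innerSL_apply_apply, ofRealCLM_apply,
      coe_fst', coe_snd', Pi.sub_apply, smul_eq_mul, zero_sub, neg_apply, inner_neg_right,
      real_inner_comm (x - Q t q p), real_inner_comm (y - q)]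
    push_cast
    ring

theorem I_mul_dz_fgaPhase_eq_sum (v : EuclideanSpace ℝ (Fin d)) :
    I * (fderiv ℝ (fun q' => fgaPhase d Q P S t x y q' p) q v
        - I * fderiv ℝ (fun p' => fgaPhase d Q P S t x y q p') p v)
      = ∑ k : Fin d,
          (fderiv ℝ (fun q' => ((Q t q' p k : ℝ) : ℂ) + I * ((P t q' p k : ℝ) : ℂ)) q v
            - I * fderiv ℝ (fun p' => ((Q t q p' k : ℝ) : ℂ) + I * ((P t q p' k : ℝ) : ℂ)) p v)
          * (((x - Q t q p) k : ℝ) : ℂ) := by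
  have hZ (k : Fin d) : HasFDerivAt
      (fun u : _ × _ => ((Q t u.1 u.2 k : ℝ) : ℂ) + I * ((P t u.1 u.2 k : ℝ) : ℂ))
      (ofRealCLM.comp ((EuclideanSpace.proj k).comp ((fst ℝ _ _).comp M))
        + I • ofRealCLM.comp ((EuclideanSpace.proj k).comp ((snd ℝ _ _).comp M))) (q, p) :=
    (ofRealCLM.hasFDerivAt.comp _
        ((EuclideanSpace.proj (𝕜 := ℝ) k).hasFDerivAt.comp _ hQP.fst)).add
      ((ofRealCLM.hasFDerivAt.comp _
        ((EuclideanSpace.proj (𝕜 := ℝ) k).hasFDerivAt.comp _ hQP.snd)).const_mul I)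
  have hΦ := hasFDerivAt_fgaPhase (x := x) (y := y) hQP hS
  simp only [hΦ.fderiv_comp_prodMk_left_apply, hΦ.fderiv_comp_prodMk_right_apply,
    fun k => (hZ k).fderiv_comp_prodMk_left_apply, fun k => (hZ k).fderiv_comp_prodMk_right_apply]
  simp only [add_apply, sub_apply, smul_apply, ContinuousLinearMap.comp_apply,
    innerSL_apply_apply, ofRealCLM_apply, coe_fst', coe_snd', smul_eq_mul, PiLp.proj_apply,
    inner_zero_right, sub_zero, Complex.ofReal_add, Complex.ofReal_sub, add_zero,
    EuclideanSpace.ofReal_inner_eq_sum, Finset.mul_sum, mul_sub, mul_add,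
    ← Finset.sum_sub_distrib, ← Finset.sum_add_distrib]
  refine Finset.sum_congr rfl fun k _ => ?_
  linear_combination ((x - Q t q p) k * (I * (M (0, v)).1 k - (M (v, 0)).1 k) : ℂ) * I_sq

end Phase

theorem phase_dz_identity (T : ℝ) (hT : 0 < T)
    (H : EuclideanSpace ℝ (Fin d) → EuclideanSpace ℝ (Fin d) → ℝ)
    (hH : ContDiffOn ℝ 2
      (fun qp : EuclideanSpace ℝ (Fin d) × EuclideanSpace ℝ (Fin d) => H qp.1 qp.2)
      {qp | qp.2 ≠ 0})
    (Q P : ℝ → EuclideanSpace ℝ (Fin d) → EuclideanSpace ℝ (Fin d) → EuclideanSpace ℝ (Fin d))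
    (S : ℝ → EuclideanSpace ℝ (Fin d) → EuclideanSpace ℝ (Fin d) → ℝ)
    (hflow : ContDiffOn ℝ 1
      (fun w : ℝ × EuclideanSpace ℝ (Fin d) × EuclideanSpace ℝ (Fin d) =>
        (Q w.1 w.2.1 w.2.2, P w.1 w.2.1 w.2.2))
      (Set.Icc (0:ℝ) T ×ˢ (Set.univ ×ˢ {p : EuclideanSpace ℝ (Fin d) | p ≠ 0})))
    (hQode : ∀ (q p : EuclideanSpace ℝ (Fin d)), p ≠ 0 → ∀ t ∈ Set.Icc (0:ℝ) T,
      HasDerivAt (fun s => Q s q p) (gradient (H (Q t q p)) (P t q p)) t)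
    (hPode : ∀ (q p : EuclideanSpace ℝ (Fin d)), p ≠ 0 → ∀ t ∈ Set.Icc (0:ℝ) T,
      HasDerivAt (fun s => P s q p) (-(gradient (fun q' => H q' (P t q p)) (Q t q p))) t)
    (hQ0 : ∀ q p, Q 0 q p = q) (hP0 : ∀ q p, P 0 q p = p)
    (hPne : ∀ (q p : EuclideanSpace ℝ (Fin d)), p ≠ 0 → ∀ t ∈ Set.Icc (0:ℝ) T, P t q p ≠ 0)
    (hS : ∀ t q p, S t q p = ∫ τ in (0:ℝ)..t,
      ((inner ℝ (P τ q p) (deriv (fun s => Q s q p) τ) : ℝ) - H (Q τ q p) (P τ q p))) :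
    ∀ t ∈ Set.Icc (0:ℝ) T, ∀ (x y q p : EuclideanSpace ℝ (Fin d)), p ≠ 0 → ∀ j : Fin d,
      Complex.I * (fderiv ℝ (fun q' => fgaPhase d Q P S t x y q' p) q
          (EuclideanSpace.single j 1)
        - Complex.I * fderiv ℝ (fun p' => fgaPhase d Q P S t x y q p') p
          (EuclideanSpace.single j 1))
      = ∑ k : Fin d,
          (fderiv ℝ (fun q' => ((Q t q' p k : ℝ) : ℂ) + Complex.I * ((P t q' p k : ℝ) : ℂ)) q
              (EuclideanSpace.single j 1)
            - Complex.I *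
              fderiv ℝ (fun p' => ((Q t q p' k : ℝ) : ℂ) + Complex.I * ((P t q p' k : ℝ) : ℂ)) p
              (EuclideanSpace.single j 1))
          * (((x - Q t q p) k : ℝ) : ℂ) := by
  intro t ht x y q p hp j
  have hU : IsOpen {u : EuclideanSpace ℝ (Fin d) × EuclideanSpace ℝ (Fin d) | u.2 ≠ 0} :=
    isOpen_ne_fun continuous_snd continuous_const
  have hφ : IsFlowOn (hamiltonianField H) (fun s u => (Q s u.1 u.2, P s u.1 u.2)) T
      {u | u.2 ≠ 0} :=
    { contDiffOn := by rwa [univ_prod] at hflow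
      hasDerivAt := fun s hs u hu => (hQode u.1 u.2 hu s hs).prodMk (hPode u.1 u.2 hu s hs)
      mapsTo := fun w hw => hPne w.2.1 w.2.2 hw.2 w.1 hw.1
      initial := fun u _ => by rw [hQ0, hP0] }
  have hqp : (q, p) ∈ {u : EuclideanSpace ℝ (Fin d) × EuclideanSpace ℝ (Fin d) | u.2 ≠ 0} :=
    hp
  exact I_mul_dz_fgaPhase_eq_sum (hφ.hasFDerivAt hU ht hqp)
    (by simpa only [hS] using hasFDerivAt_action hU hH hT hφ ht hqp) _
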